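/- arXiv:2404.03867 — 4 statements merged into one kernel-verified Lean document; each statement's English description precedes it below -/
import Mathlib

section
/- Assume ρ = R/M > 1. Then: (i) π(x*) ≥ 1 − ρ^{−1}; (ii) Gap(P₀^lazy) ≥ 1/(c(ρ)·M); and (iii) for every ε ∈ (0, 1/2), τ(P₀^lazy, ε) ≤ c(ρ)·M·log(1/(ε·π_min)). -/
open Finset

noncomputable section

variable {X : Type*}

/-- Total variation distance between two (finitely supported) distributions. -/
def tvDist [Fintype X] (ζ μ : X → ℝ) : ℝ :=
  ⨆ A : Finset X, |∑ a ∈ A, ζ a - ∑ a ∈ A, μ a|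

/-- The lazy version `(P + I)/2` of a transition matrix. -/
def lazyM [Fintype X] [DecidableEq X] (P : Matrix X X ℝ) : Matrix X X ℝ :=
  (2 : ℝ)⁻¹ • (P + 1)

/-- Mixing time started from `x`. -/
def mixTimeFrom [Fintype X] [DecidableEq X] (P : Matrix X X ℝ) (μ : X → ℝ) (ε : ℝ) (x : X) : ℕ :=
  sInf {t : ℕ | tvDist (fun y => (P ^ t) x y) μ ≤ ε}

/-- Worst-case mixing time. -/
def mixTime [Fintype X] [DecidableEq X] (P : Matrix X X ℝ) (μ : X → ℝ) (ε : ℝ) : ℕ :=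
  Finset.univ.sup (mixTimeFrom P μ ε)

/-- Variational spectral gap of a reversible transition matrix. -/
def specGap [Fintype X] (P : Matrix X X ℝ) (μ : X → ℝ) : ℝ :=
  sInf { r : ℝ | ∃ f : X → ℝ,
    (2⁻¹ * ∑ x, ∑ y, (f x - f y) ^ 2 * μ x * μ y) ≠ 0 ∧
    r = (2⁻¹ * ∑ x, ∑ y, (f x - f y) ^ 2 * P x y * μ x) /
        (2⁻¹ * ∑ x, ∑ y, (f x - f y) ^ 2 * μ x * μ y) }

/-- Restricted spectral gap on `X0`. -/
def restGap [Fintype X] (P : Matrix X X ℝ) (μ : X → ℝ) (X0 : Finset X) : ℝ :=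
  sInf { r : ℝ | ∃ f : X → ℝ,
    0 < (∑ x ∈ X0, ∑ y ∈ X0, (f x - f y) ^ 2 * μ x * μ y) ∧
    r = (∑ x ∈ X0, ∑ y ∈ X0, (f x - f y) ^ 2 * P x y * μ x) /
        (∑ x ∈ X0, ∑ y ∈ X0, (f x - f y) ^ 2 * μ x * μ y) }

/-- `c(ρ) = 4 / (1 - ρ^{-1/2})³`. -/
def cFun (ρ : ℝ) : ℝ := 4 / (1 - ρ ^ (-(2 : ℝ)⁻¹)) ^ 3

/-- Maximum neighborhood size. -/
def Mmax [Fintype X] (N : X → Finset X) : ℕ := Finset.univ.sup fun x => (N x).card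

/-- Minimal value of `π`. -/
def piMin [Fintype X] [Nonempty X] (π : X → ℝ) : ℝ := ⨅ x, π x

/-- `R = min_{x ≠ x*} max_{y ∈ N(x)} π(y)/π(x)`. -/
def Rval [Fintype X] (π : X → ℝ) (N : X → Finset X) (xstar : X) : ℝ :=
  sInf ((fun x => sSup ((fun y => π y / π x) '' (N x : Set X))) '' {x | x ≠ xstar})

/-- Restricted `R|_{X₀}`. -/
def RvalRes [Fintype X] [DecidableEq X] (π : X → ℝ) (N : X → Finset X) (X0 : Finset X)
    (x0star : X) : ℝ :=
  sInf ((fun x => sSup ((fun y => π y / π x) '' ((N x ∩ X0 : Finset X) : Set X))) ''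
    {x | x ∈ X0 ∧ x ≠ x0star})

/-- Random walk Metropolis–Hastings transition matrix. -/
def rwMH [Fintype X] [DecidableEq X] (π : X → ℝ) (N : X → Finset X) : Matrix X X ℝ :=
  Matrix.of fun x y =>
    if y ∈ N x then min (((N x).card : ℝ))⁻¹ (π y / (π x * ((N y).card : ℝ)))
    else if y = x then
      1 - ∑ z ∈ N x, min (((N x).card : ℝ))⁻¹ (π z / (π x * ((N z).card : ℝ)))
    else 0

/-- The clipping function `clip(u, ℓ, L)`. -/
def clip (l L u : ℝ) : ℝ := if u < l then l else if u ≤ L then u else L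

/-- Normalizing constant of the informed proposal. -/
def Zh [Fintype X] (π : X → ℝ) (N : X → Finset X) (l L : ℝ) (x : X) : ℝ :=
  ∑ y ∈ N x, clip l L (π y / π x)

/-- Informed proposal kernel. -/
def Kh [Fintype X] [DecidableEq X] (π : X → ℝ) (N : X → Finset X) (l L : ℝ) (x y : X) : ℝ :=
  (if y ∈ N x then clip l L (π y / π x) else 0) / Zh π N l L x

/-- Informed Metropolis–Hastings transition matrix. -/
def infMH [Fintype X] [DecidableEq X] (π : X → ℝ) (N : X → Finset X) (l L : ℝ) :
    Matrix X X ℝ :=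
  Matrix.of fun x y =>
    if y = x then
      1 - ∑ z ∈ Finset.univ.erase x,
        Kh π N l L x z * min 1 ((π z * Kh π N l L z x) / (π x * Kh π N l L x z))
    else Kh π N l L x y * min 1 ((π y * Kh π N l L y x) / (π x * Kh π N l L x y))

/-- List of consecutive edges of a list of vertices. -/
def edgeList : List X → List (X × X)
  | a :: b :: rest => (a, b) :: edgeList (b :: rest)
  | _ => []

/-- `γ` is a path from `x` to `y` (x ≠ y) with all edges in `E` and no repeated edge. -/
def IsPathIn (E : Finset (X × X)) (x y : X) (γ : List X) : Prop :=
  x ≠ y ∧ γ.head? = some x ∧ γ.getLast? = some y ∧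
    (∀ e ∈ edgeList γ, e ∈ E) ∧ (edgeList γ).Nodup

/-- `Φ(x,y) = Σ_{γ ∈ Γ_E(x,y)} φ(γ)`. -/
def flowBetween (E : Finset (X × X)) (φ : List X → ℝ) (x y : X) : ℝ :=
  ∑' γ : {γ : List X // IsPathIn E x y γ}, φ γ

/-- Flow from `x` to `y` through the edge `e`. -/
def flowBetweenThrough (E : Finset (X × X)) (φ : List X → ℝ) (x y : X) (e : X × X) : ℝ :=
  ∑' γ : {γ : List X // IsPathIn E x y γ ∧ e ∈ edgeList γ}, φ γ

/-- `w`-length of a path. -/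
def wlen (w : X × X → ℝ) (γ : List X) : ℝ := ((edgeList γ).map w).sum

/-- Congestion `A(E, w, φ)`. -/
def congestion [Fintype X] (π : X → ℝ) (P : Matrix X X ℝ) (E : Finset (X × X))
    (w : X × X → ℝ) (φ : List X → ℝ) : ℝ :=
  ⨆ e ∈ E,
    (∑' γ : {γ : List X // (∃ x y, IsPathIn E x y γ) ∧ e ∈ edgeList γ}, wlen w γ * φ γ) /
      (π e.1 * P e.1 e.2 * w e)

/-- `N_S(x) = {x' ∈ N(x) : π(x')/π(x) ≥ S}`. -/
def NS [Fintype X] (π : X → ℝ) (N : X → Finset X) (S : ℝ) (x : X) : Finset X :=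
  (N x).filter fun y => S ≤ π y / π x

/-- Edge set `E_S`. -/
def ES [Fintype X] [DecidableEq X] (π : X → ℝ) (N : X → Finset X) (S : ℝ) : Finset (X × X) :=
  Finset.univ.filter fun e => e.1 ∈ NS π N S e.2 ∨ e.2 ∈ NS π N S e.1

/-- Restricted `N|^S_{X₀}(x)`. -/
def NSres [Fintype X] [DecidableEq X] (π : X → ℝ) (N : X → Finset X) (X0 : Finset X) (S : ℝ)
    (x : X) : Finset X :=
  ((N x) ∩ X0).filter fun y => S ≤ π y / π x

/-- Restricted edge set `E_S⁰`. -/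
def ESres [Fintype X] [DecidableEq X] (π : X → ℝ) (N : X → Finset X) (X0 : Finset X)
    (S : ℝ) : Finset (X × X) :=
  Finset.univ.filter fun e =>
    (e.1 ∈ X0 ∧ e.2 ∈ X0) ∧ (e.1 ∈ NSres π N X0 S e.2 ∨ e.2 ∈ NSres π N X0 S e.1)

end

/-!
Since `R > M ≥ 1`, every `x ≠ x*` has a neighbour `g x` with `π (g x) ≥ R π x`, and iterating
this uphill map drives every state to `x*`. A state has at most `M` preimages under `g`, so the
`π`-mass of the `j`-fold preimage of `z ≠ x*` is at most `ρ⁻ʲ π z`; the case `j = 1` is (i).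
Writing `f x - f x*` as a telescoping sum along `x, g x, g² x, …` and applying Cauchy–Schwarz
with weights `ρ^{-j/2}` gives the canonical-path Poincaré inequality `Var f ≤ K E(f)`,
`K = 2M (1 - ρ^{-1/2})⁻²`, for the lazy chain, whose uphill moves have probability at least
`1 / (2M)`; as `2K ≤ c(ρ) M`, this gives (ii). The lazy chain is a positive operator, so on
centred functions it contracts `L²(π)` by the factor `1 - 1/K` per step; applied to the centred
density of `δ_x`, Cauchy–Schwarz turns this into a total-variation bound, which gives (iii).
-/

open Finset Matrix

theorem one_sub_inv_pow_floor_mul_log_le {K C a : ℝ} (hK : 1 ≤ K) (hKC : 2 * K ≤ C)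
    (ha0 : 0 < a) (ha1 : a ≤ 1) :
    (1 - K⁻¹) ^ ⌊C * Real.log (1 / a)⌋₊ ≤ Real.exp 1 * a ^ 2 := by
  set L := Real.log (1 / a)
  have hL : 0 ≤ L := Real.log_nonneg (one_le_one_div ha0 ha1)
  have hK0 : 0 < K := by linarith
  have hfloor : C * L - 1 ≤ ⌊C * L⌋₊ := by linarith [Nat.lt_floor_add_one (C * L)]
  have h2KL : 2 * L ≤ K⁻¹ * (C * L) := by
    calc 2 * L = K⁻¹ * (2 * K * L) := by field_simp
      _ ≤ K⁻¹ * (C * L) := by gcongr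
  calc (1 - K⁻¹) ^ ⌊C * L⌋₊ ≤ Real.exp (-K⁻¹) ^ ⌊C * L⌋₊ :=
        pow_le_pow_left₀ (by linarith [inv_le_one_of_one_le₀ hK]) (Real.one_sub_le_exp_neg _) _
    _ = Real.exp (-(K⁻¹ * ⌊C * L⌋₊)) := by rw [← Real.exp_nat_mul]; ring_nf
    _ ≤ Real.exp (1 + -L + -L) := by
        refine Real.exp_le_exp.mpr ?_
        nlinarith [mul_le_mul_of_nonneg_left hfloor (inv_nonneg.mpr hK0.le),
          inv_le_one_of_one_le₀ hK]
    _ = Real.exp 1 * a ^ 2 := by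
        rw [Real.exp_add, Real.exp_add, Real.exp_neg, Real.exp_log (by positivity), one_div,
          inv_inv]
        ring

theorem geom_sum_le_inv_one_sub {l : ℝ} (hl0 : 0 ≤ l) (hl1 : l < 1) (n : ℕ) :
    ∑ j ∈ range n, l ^ j ≤ (1 - l)⁻¹ := by
  simpa [← Nat.Ico_zero_eq_range] using geom_sum_Ico_le_of_lt_one (m := 0) (n := n) hl0 hl1

namespace Matrix

variable {X : Type*}

def IsReversible (P : Matrix X X ℝ) (μ : X → ℝ) : Prop := ∀ x y, μ x * P x y = μ y * P y x

end Matrix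

section ReversibleChain

variable {X : Type*} [Fintype X]

noncomputable def varianceForm (μ f : X → ℝ) : ℝ := 2⁻¹ * ∑ x, ∑ y, (f x - f y) ^ 2 * μ x * μ y

noncomputable def dirichletForm (P : Matrix X X ℝ) (μ f : X → ℝ) : ℝ :=
  2⁻¹ * ∑ x, ∑ y, (f x - f y) ^ 2 * P x y * μ x

variable {μ : X → ℝ} {P : Matrix X X ℝ}

theorem varianceForm_eq (hμ : ∑ x, μ x = 1) (f : X → ℝ) :
    varianceForm μ f = ∑ x, μ x * f x ^ 2 - (∑ x, μ x * f x) ^ 2 := by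
  have hexpand : ∀ x, ∑ y, (f x - f y) ^ 2 * μ x * μ y = μ x * f x ^ 2
      - 2 * (μ x * f x * ∑ y, μ y * f y) + μ x * ∑ y, μ y * f y ^ 2 := fun x => by
    rw [← one_mul (μ x * f x ^ 2), ← hμ, sum_mul, mul_sum, mul_sum, mul_sum, ← sum_sub_distrib,
      ← sum_add_distrib]
    exact sum_congr rfl fun y _ => by ring
  simp only [varianceForm, hexpand, sum_add_distrib, sum_sub_distrib, ← sum_mul, ← mul_sum, hμ]
  ring

theorem varianceForm_nonneg (hμ0 : ∀ x, 0 ≤ μ x) (f : X → ℝ) : 0 ≤ varianceForm μ f :=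
  mul_nonneg (by norm_num) (sum_nonneg fun a _ => sum_nonneg fun b _ =>
    mul_nonneg (mul_nonneg (sq_nonneg _) (hμ0 a)) (hμ0 b))

theorem varianceForm_pos (hμ0 : ∀ x, 0 < μ x) {f : X → ℝ} {x y : X} (hxy : f x ≠ f y) :
    0 < varianceForm μ f := by
  have hterm : ∀ a b, 0 ≤ (f a - f b) ^ 2 * μ a * μ b := fun a b =>
    mul_nonneg (mul_nonneg (sq_nonneg _) (hμ0 a).le) (hμ0 b).le
  have hxy' : 0 < (f x - f y) ^ 2 * μ x * μ y := by
    have := sub_ne_zero.mpr hxy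
    have := hμ0 x
    have := hμ0 y
    positivity
  have h1 := single_le_sum (fun b _ => hterm x b) (mem_univ y)
  have h2 := single_le_sum (f := fun a => ∑ b, (f a - f b) ^ 2 * μ a * μ b)
    (fun a _ => sum_nonneg fun b _ => hterm a b) (mem_univ x)
  simp only [varianceForm]
  linarith

theorem varianceForm_le_sum_mul_sq_sub (hμsum : ∑ x, μ x = 1) (f : X → ℝ) (c : ℝ) :
    varianceForm μ f ≤ ∑ x, μ x * (f x - c) ^ 2 := by
  have hshift : varianceForm μ f = varianceForm μ (fun x => f x - c) := by
    simp only [varianceForm, sub_sub_sub_cancel_right]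
  rw [hshift, varianceForm_eq hμsum]
  exact sub_le_self _ (sq_nonneg _)

theorem sum_mul_sq_sub_le_dirichletForm (hrev : P.IsReversible μ) (hP0 : ∀ x y, 0 ≤ P x y)
    (hμ0 : ∀ x, 0 ≤ μ x) (g : X → X) (S : Finset X)
    (hS : ∀ z ∈ S, ∀ w ∈ S, g z = w → g w ≠ z) (f : X → ℝ) :
    ∑ z ∈ S, μ z * P z (g z) * (f z - f (g z)) ^ 2 ≤ dirichletForm P μ f := by
  classical
  set F : X × X → ℝ := fun p => (f p.1 - f p.2) ^ 2 * P p.1 p.2 * μ p.1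
  have hfwd : ∑ p ∈ S.image (fun z => (z, g z)), F p =
      ∑ z ∈ S, μ z * P z (g z) * (f z - f (g z)) ^ 2 := by
    rw [sum_image fun a _ b _ h => (Prod.mk.inj h).1]
    exact sum_congr rfl fun z _ => by ring
  have hbwd : ∑ p ∈ S.image (fun z => (g z, z)), F p =
      ∑ z ∈ S, μ z * P z (g z) * (f z - f (g z)) ^ 2 := by
    rw [sum_image fun a _ b _ h => (Prod.mk.inj h).2]
    exact sum_congr rfl fun z _ => by
      simp only [F]
      linear_combination (f z - f (g z)) ^ 2 * hrev (g z) z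
  have hdisj : Disjoint (S.image fun z => (z, g z)) (S.image fun z => (g z, z)) := by
    rw [disjoint_left]
    rintro p hp hp'
    obtain ⟨z, hz, rfl⟩ := mem_image.mp hp
    obtain ⟨w, hw, hwz⟩ := mem_image.mp hp'
    obtain ⟨h₁, h₂⟩ := Prod.mk.inj hwz
    exact hS z hz w hw h₂.symm h₁
  calc ∑ z ∈ S, μ z * P z (g z) * (f z - f (g z)) ^ 2
      = 2⁻¹ * ∑ p ∈ S.image (fun z => (z, g z)) ∪ S.image (fun z => (g z, z)), F p := by
        rw [sum_union hdisj, hfwd, hbwd]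
        ring
    _ ≤ 2⁻¹ * ∑ p : X × X, F p :=
        mul_le_mul_of_nonneg_left (sum_le_univ_sum_of_nonneg fun p =>
          mul_nonneg (mul_nonneg (sq_nonneg _) (hP0 _ _)) (hμ0 _)) (by norm_num)
    _ = dirichletForm P μ f := by rw [Fintype.sum_prod_type]; rfl

theorem le_specGap_of_poincare (hμ0 : ∀ x, 0 < μ x) {x₁ x₂ : X} (hx : x₁ ≠ x₂) {K : ℝ}
    (hK0 : 0 < K) (hK : ∀ f, varianceForm μ f ≤ K * dirichletForm P μ f) :
    1 / K ≤ specGap P μ := by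
  classical
  have hind := varianceForm_pos (f := fun z => if z = x₁ then (1 : ℝ) else 0) hμ0
    (x := x₁) (y := x₂) (by simp [Ne.symm hx])
  refine le_csInf ⟨_, _, hind.ne', rfl⟩ ?_
  rintro r ⟨f, hf, rfl⟩
  have hVpos : 0 < varianceForm μ f := (varianceForm_nonneg (fun x => (hμ0 x).le) f).lt_of_ne' hf
  change 1 / K ≤ dirichletForm P μ f / varianceForm μ f
  rw [div_le_div_iff₀ hK0 hVpos]
  linarith [hK f]

theorem tvDist_le_half_sum_abs_sub (p q : X → ℝ) (hpq : ∑ x, p x = ∑ x, q x) :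
    tvDist p q ≤ 2⁻¹ * ∑ x, |p x - q x| := by
  classical
  refine ciSup_le fun A => ?_
  have hcompl : ∑ a ∈ A, (p a - q a) = -∑ a ∈ Aᶜ, (p a - q a) := by
    rw [eq_neg_iff_add_eq_zero, sum_add_sum_compl, sum_sub_distrib, hpq, sub_self]
  have hA := abs_sum_le_sum_abs (fun a => p a - q a) A
  have hAc := abs_sum_le_sum_abs (fun a => p a - q a) Aᶜ
  rw [← sum_sub_distrib, ← sum_add_sum_compl A fun a => |p a - q a|]
  rw [hcompl, abs_neg] at hA
  rw [hcompl, abs_neg]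
  linarith

theorem sq_sum_mul_abs_le (hμ0 : ∀ x, 0 ≤ μ x) (hμsum : ∑ x, μ x = 1) (u : X → ℝ) :
    (∑ x, μ x * |u x|) ^ 2 ≤ ∑ x, μ x * u x ^ 2 := by
  have := sum_sq_le_sum_mul_sum_of_sq_le_mul univ (r := fun x => μ x * |u x|) (f := μ)
    (g := fun x => μ x * u x ^ 2) (fun x _ => hμ0 x) (fun x _ => mul_nonneg (hμ0 x) (sq_nonneg _))
    (fun x _ => le_of_eq (by rw [mul_pow, sq_abs]; ring))
  rwa [hμsum, one_mul] at this

theorem piMin_le [Nonempty X] (x : X) : piMin μ ≤ μ x := ciInf_le (Finite.bddBelow_range μ) x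

theorem piMin_pos [Nonempty X] (hμ0 : ∀ x, 0 < μ x) : 0 < piMin μ := by
  obtain ⟨x, hx⟩ := exists_eq_ciInf_of_finite (f := μ)
  rw [piMin, ← hx]
  exact hμ0 x

variable [DecidableEq X]

theorem Matrix.IsReversible.vecMul_eq (hP : P.IsReversible μ) (hrow : P ∈ rowStochastic ℝ X) :
    μ ᵥ* P = μ := by
  ext y
  simp only [vecMul, dotProduct]
  rw [sum_congr rfl fun x _ => hP x y, ← mul_sum, sum_row_of_mem_rowStochastic hrow, mul_one]

theorem Matrix.IsReversible.pow (hP : P.IsReversible μ) (t : ℕ) : (P ^ t).IsReversible μ := by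
  induction t with
  | zero =>
    intro x y
    by_cases h : x = y
    · rw [h]
    · simp [h, Ne.symm h]
  | succ t ih =>
    intro x y
    calc μ x * (P ^ (t + 1)) x y = ∑ z, μ x * (P ^ t) x z * P z y := by
          simp only [pow_succ, mul_apply, mul_sum, mul_assoc]
      _ = ∑ z, μ y * (P y z * (P ^ t) z x) := sum_congr rfl fun z _ => by
          rw [ih x z]; linear_combination (P ^ t) z x * hP z y
      _ = μ y * (P ^ (t + 1)) y x := by
          simp only [pow_succ', mul_apply, mul_sum]

theorem Matrix.IsReversible.lazyM (hP : P.IsReversible μ) : (lazyM P).IsReversible μ := by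
  intro x y
  by_cases h : x = y
  · rw [h]
  · simp only [_root_.lazyM, smul_apply, add_apply, one_apply, h, Ne.symm h, if_false,
      smul_eq_mul, add_zero]
    linear_combination hP x y / 2

theorem lazyM_mem_rowStochastic (hP : P ∈ rowStochastic ℝ X) : lazyM P ∈ rowStochastic ℝ X := by
  convert convex_rowStochastic hP (one_mem _) (by norm_num : (0 : ℝ) ≤ 2⁻¹)
    (by norm_num : (0 : ℝ) ≤ 2⁻¹) (by norm_num) using 1
  simp [lazyM, smul_add]

theorem lazyM_mulVec (h : X → ℝ) : lazyM P *ᵥ h = (2 : ℝ)⁻¹ • (P *ᵥ h + h) := by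
  rw [lazyM, smul_mulVec, add_mulVec, one_mulVec]

theorem dirichletForm_eq (hrow : P ∈ rowStochastic ℝ X) (hμ : μ ᵥ* P = μ) (h : X → ℝ) :
    dirichletForm P μ h = ∑ x, μ x * h x ^ 2 - ∑ x, μ x * h x * (P *ᵥ h) x := by
  have hsq : ∑ x, ∑ y, μ x * P x y * h y ^ 2 = ∑ x, μ x * h x ^ 2 := by
    rw [sum_comm]
    exact sum_congr rfl fun y _ => by rw [← sum_mul, ← congrFun hμ y]; rfl
  have hexpand : ∀ x, ∑ y, (h x - h y) ^ 2 * P x y * μ x = μ x * h x ^ 2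
      - 2 * (μ x * h x * (P *ᵥ h) x) + ∑ y, μ x * P x y * h y ^ 2 := fun x => by
    calc _ = ∑ y, (μ x * h x ^ 2 * P x y - 2 * (μ x * h x * (P x y * h y))
          + μ x * P x y * h y ^ 2) := sum_congr rfl fun y _ => by ring
      _ = _ := by
        rw [sum_add_distrib, sum_sub_distrib, ← mul_sum, sum_row_of_mem_rowStochastic hrow x,
          ← mul_sum, ← mul_sum, mul_one]
        rfl
  simp only [dirichletForm, hexpand, sum_add_distrib, sum_sub_distrib, hsq, ← mul_sum]
  ring

theorem sum_mul_mulVec_sq_le (hrow : P ∈ rowStochastic ℝ X) (hμ0 : ∀ x, 0 ≤ μ x)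
    (hμ : μ ᵥ* P = μ) (h : X → ℝ) :
    ∑ x, μ x * (P *ᵥ h) x ^ 2 ≤ ∑ x, μ x * h x ^ 2 := by
  have hjensen : ∀ x, (P *ᵥ h) x ^ 2 ≤ (P *ᵥ (h ^ 2)) x := fun x => by
    have := sum_sq_le_sum_mul_sum_of_sq_le_mul univ (r := fun y => P x y * h y)
      (fun y _ => nonneg_of_mem_rowStochastic hrow (i := x) (j := y))
      (fun y _ => mul_nonneg (nonneg_of_mem_rowStochastic hrow) (sq_nonneg (h y)))
      (fun y _ => le_of_eq (by ring))
    rwa [sum_row_of_mem_rowStochastic hrow, one_mul] at this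
  calc ∑ x, μ x * (P *ᵥ h) x ^ 2 ≤ μ ⬝ᵥ (P *ᵥ (h ^ 2)) :=
        sum_le_sum fun x _ => mul_le_mul_of_nonneg_left (hjensen x) (hμ0 x)
    _ = ∑ x, μ x * h x ^ 2 := by rw [dotProduct_mulVec, hμ]; rfl

theorem sum_mul_lazyM_mulVec_sq_le (hrow : P ∈ rowStochastic ℝ X) (hμ0 : ∀ x, 0 ≤ μ x)
    (hμ : μ ᵥ* P = μ) (h : X → ℝ) :
    ∑ x, μ x * (lazyM P *ᵥ h) x ^ 2 ≤ ∑ x, μ x * h x * (lazyM P *ᵥ h) x := by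
  have := sum_mul_mulVec_sq_le hrow hμ0 hμ h
  have hexpand : ∑ x, μ x * h x * (lazyM P *ᵥ h) x - ∑ x, μ x * (lazyM P *ᵥ h) x ^ 2
      = 4⁻¹ * (∑ x, μ x * h x ^ 2 - ∑ x, μ x * (P *ᵥ h) x ^ 2) := by
    simp only [lazyM_mulVec, Pi.smul_apply, Pi.add_apply, smul_eq_mul, ← sum_sub_distrib,
      mul_sum]
    exact sum_congr rfl fun x _ => by ring
  linarith

theorem sum_mul_mulVec_sq_le_of_poincare (hrow : P ∈ rowStochastic ℝ X) (hμsum : ∑ x, μ x = 1)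
    (hμ : μ ᵥ* P = μ) {K : ℝ} (hK0 : 0 < K)
    (hpsd : ∀ h, ∑ x, μ x * (P *ᵥ h) x ^ 2 ≤ ∑ x, μ x * h x * (P *ᵥ h) x)
    (hK : ∀ f, varianceForm μ f ≤ K * dirichletForm P μ f) (h : X → ℝ) (hmean : μ ⬝ᵥ h = 0) :
    ∑ x, μ x * (P *ᵥ h) x ^ 2 ≤ (1 - K⁻¹) * ∑ x, μ x * h x ^ 2 := by
  have hpoinc := hK h
  rw [varianceForm_eq hμsum, show ∑ x, μ x * h x = 0 from hmean, dirichletForm_eq hrow hμ]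
    at hpoinc
  have : ∑ x, μ x * h x * (P *ᵥ h) x ≤ (1 - K⁻¹) * ∑ x, μ x * h x ^ 2 := by
    rw [sub_mul, one_mul, le_sub_iff_add_le, ← le_sub_iff_add_le', inv_mul_le_iff₀ hK0]
    linarith
  linarith [hpsd h]

theorem vecMul_pow_eq_of_vecMul_eq (hμ : μ ᵥ* P = μ) (t : ℕ) : μ ᵥ* P ^ t = μ := by
  induction t with
  | zero => simp
  | succ t ih => rw [pow_succ, ← vecMul_vecMul, ih, hμ]

theorem sum_mul_pow_mulVec_sq_le {q : ℝ} (hq : 0 ≤ q) (hμ : μ ᵥ* P = μ)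
    (hstep : ∀ h, μ ⬝ᵥ h = 0 → ∑ x, μ x * (P *ᵥ h) x ^ 2 ≤ q * ∑ x, μ x * h x ^ 2)
    (h : X → ℝ) (hmean : μ ⬝ᵥ h = 0) (t : ℕ) :
    ∑ x, μ x * (P ^ t *ᵥ h) x ^ 2 ≤ q ^ t * ∑ x, μ x * h x ^ 2 := by
  induction t with
  | zero => simp
  | succ t ih =>
    have hmean_t : μ ⬝ᵥ (P ^ t *ᵥ h) = 0 := by
      rw [dotProduct_mulVec, vecMul_pow_eq_of_vecMul_eq hμ, hmean]
    calc ∑ x, μ x * (P ^ (t + 1) *ᵥ h) x ^ 2 = ∑ x, μ x * (P *ᵥ (P ^ t *ᵥ h)) x ^ 2 := by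
          rw [pow_succ', mulVec_mulVec]
      _ ≤ q * ∑ x, μ x * (P ^ t *ᵥ h) x ^ 2 := hstep _ hmean_t
      _ ≤ q ^ (t + 1) * ∑ x, μ x * h x ^ 2 := by
          rw [pow_succ', mul_assoc]; exact mul_le_mul_of_nonneg_left ih hq

theorem sum_abs_pow_apply_sub_le (hrow : P ∈ rowStochastic ℝ X) (hrev : P.IsReversible μ)
    (hμ0 : ∀ x, 0 < μ x) (hμsum : ∑ x, μ x = 1) {q : ℝ} (hq : 0 ≤ q)
    (hstep : ∀ h, μ ⬝ᵥ h = 0 → ∑ x, μ x * (P *ᵥ h) x ^ 2 ≤ q * ∑ x, μ x * h x ^ 2)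
    (t : ℕ) (x : X) :
    ∑ y, |(P ^ t) x y - μ y| ≤ √(q ^ t / μ x) := by
  have hμx := hμ0 x
  -- the density of `δ_x` with respect to `μ`, centred
  set f₀ : X → ℝ := fun y => (if y = x then (μ x)⁻¹ else 0) - 1
  have hmean : μ ⬝ᵥ f₀ = 0 := by
    simp only [f₀, dotProduct, mul_sub, mul_ite, mul_zero, mul_one, sum_sub_distrib,
      sum_ite_eq', mem_univ, if_true, hμsum]
    field_simp
    ring
  have hnorm : ∑ y, μ y * f₀ y ^ 2 ≤ (μ x)⁻¹ := by
    have hterm : ∀ y, μ y * f₀ y ^ 2 = (if y = x then (μ x)⁻¹ - 2 else 0) + μ y := fun y => by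
      by_cases hy : y = x
      · subst hy; simp only [f₀, if_true]; field_simp; ring
      · simp [f₀, hy]
    simp only [hterm, sum_add_distrib, sum_ite_eq', mem_univ, if_true, hμsum]
    linarith
  have hdensity : ∀ y, μ y * (P ^ t *ᵥ f₀) y = (P ^ t) x y - μ y := fun y => by
    have hrow_t : ∑ z, (P ^ t) y z = 1 := sum_row_of_mem_rowStochastic (pow_mem hrow t) y
    have : (P ^ t *ᵥ f₀) y = (P ^ t) y x / μ x - 1 := by
      simp only [f₀, mulVec, dotProduct, mul_sub, mul_ite, mul_zero, mul_one, sum_sub_distrib,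
        sum_ite_eq', mem_univ, if_true, hrow_t, div_eq_mul_inv]
    rw [this, mul_sub, mul_one, mul_div_assoc', ← hrev.pow t x y, mul_div_cancel_left₀ _ hμx.ne']
  calc ∑ y, |(P ^ t) x y - μ y| = ∑ y, μ y * |(P ^ t *ᵥ f₀) y| := sum_congr rfl fun y _ => by
        rw [← hdensity, abs_mul, abs_of_pos (hμ0 y)]
    _ ≤ √(q ^ t / μ x) := by
        refine Real.le_sqrt_of_sq_le ?_
        calc _ ≤ ∑ y, μ y * (P ^ t *ᵥ f₀) y ^ 2 :=
              sq_sum_mul_abs_le (fun y => (hμ0 y).le) hμsum _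
          _ ≤ q ^ t * ∑ y, μ y * f₀ y ^ 2 :=
              sum_mul_pow_mulVec_sq_le hq (hrev.vecMul_eq hrow) hstep f₀ hmean t
          _ ≤ q ^ t / μ x := by
              rw [div_eq_mul_inv]
              exact mul_le_mul_of_nonneg_left hnorm (pow_nonneg hq t)

theorem tvDist_pow_le (hrow : P ∈ rowStochastic ℝ X) (hrev : P.IsReversible μ)
    (hμ0 : ∀ x, 0 < μ x) (hμsum : ∑ x, μ x = 1) {q : ℝ} (hq : 0 ≤ q)
    (hstep : ∀ h, μ ⬝ᵥ h = 0 → ∑ x, μ x * (P *ᵥ h) x ^ 2 ≤ q * ∑ x, μ x * h x ^ 2)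
    (t : ℕ) (x : X) :
    tvDist (fun y => (P ^ t) x y) μ ≤ 2⁻¹ * √(q ^ t / μ x) := by
  refine (tvDist_le_half_sum_abs_sub _ _ ?_).trans ?_
  · rw [sum_row_of_mem_rowStochastic (pow_mem hrow t), hμsum]
  · exact mul_le_mul_of_nonneg_left
      (sum_abs_pow_apply_sub_le hrow hrev hμ0 hμsum hq hstep t x) (by norm_num)

theorem mixTime_le_of_forall_tvDist_le {ε : ℝ} {t : ℕ}
    (h : ∀ x, tvDist (fun y => (P ^ t) x y) μ ≤ ε) : mixTime P μ ε ≤ t :=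
  Finset.sup_le fun x _ => Nat.sInf_le (h x)

theorem mixTime_lazyM_le_mul_log [Nonempty X] (hrow : P ∈ rowStochastic ℝ X)
    (hrev : P.IsReversible μ) (hμ0 : ∀ x, 0 < μ x) (hμsum : ∑ x, μ x = 1) {K C ε : ℝ}
    (hK : 1 ≤ K) (hKC : 2 * K ≤ C) (hε : 0 < ε) (hε1 : ε ≤ 1)
    (hpoinc : ∀ f, varianceForm μ f ≤ K * dirichletForm (lazyM P) μ f) :
    (mixTime (lazyM P) μ ε : ℝ) ≤ C * Real.log (1 / (ε * piMin μ)) := by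
  have hstep := sum_mul_mulVec_sq_le_of_poincare (lazyM_mem_rowStochastic hrow) hμsum
    (hrev.lazyM.vecMul_eq (lazyM_mem_rowStochastic hrow)) (by linarith)
    (sum_mul_lazyM_mulVec_sq_le hrow (fun x => (hμ0 x).le) (hrev.vecMul_eq hrow)) hpoinc
  have hm0 := piMin_pos hμ0
  obtain ⟨x₀⟩ := ‹Nonempty X›
  have hm1 : piMin μ ≤ 1 := (piMin_le x₀).trans
    (hμsum ▸ single_le_sum (fun y _ => (hμ0 y).le) (mem_univ x₀))
  have hεm : 0 < ε * piMin μ := mul_pos hε hm0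
  have hεm1 : ε * piMin μ ≤ 1 := by nlinarith
  refine (Nat.cast_le.mpr (mixTime_le_of_forall_tvDist_le fun x => ?_)).trans
    (Nat.floor_le (mul_nonneg (by linarith) (Real.log_nonneg (one_le_one_div hεm hεm1))))
  refine (tvDist_pow_le (lazyM_mem_rowStochastic hrow) hrev.lazyM hμ0 hμsum
    (by linarith [inv_le_one_of_one_le₀ hK]) hstep _ x).trans ?_
  have hratio : (1 - K⁻¹) ^ ⌊C * Real.log (1 / (ε * piMin μ))⌋₊ / μ x ≤ (2 * ε) ^ 2 := by
    rw [div_le_iff₀ (hμ0 x)]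
    have hmm : piMin μ * piMin μ ≤ 1 * μ x := mul_le_mul hm1 (piMin_le x) hm0.le zero_le_one
    calc _ ≤ Real.exp 1 * (ε * piMin μ) ^ 2 := one_sub_inv_pow_floor_mul_log_le hK hKC hεm hεm1
      _ ≤ 4 * (ε ^ 2 * (piMin μ * piMin μ)) := by
          rw [mul_pow, sq (piMin μ)]
          gcongr
          linarith [Real.exp_one_lt_d9]
      _ ≤ (2 * ε) ^ 2 * μ x := by nlinarith [sq_nonneg ε]
  have := Real.sqrt_le_sqrt hratio
  rw [Real.sqrt_sq (by linarith)] at this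
  linarith

end ReversibleChain

section IteratedMap

variable {X : Type*} [Fintype X] [DecidableEq X] {π : X → ℝ} {g : X → X} {x₀ : X} {q : ℝ}

theorem one_sub_le_of_sum_fiber_le (hπsum : ∑ x, π x = 1)
    (hfib : ∀ y, ∑ x ∈ univ.erase x₀ with g x = y, π x ≤ q * π y) : 1 - q ≤ π x₀ := by
  have hrest : ∑ x ∈ univ.erase x₀, π x ≤ q := by
    rw [← sum_fiberwise (univ.erase x₀) g π, ← mul_one q, ← hπsum, mul_sum]
    exact sum_le_sum fun y _ => hfib y
  linarith [add_sum_erase univ π (mem_univ x₀)]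

theorem sum_fiber_iterate_le (hfix : g x₀ = x₀) (hq : 0 ≤ q)
    (hfib : ∀ y, ∑ x ∈ univ.erase x₀ with g x = y, π x ≤ q * π y) (j : ℕ) {z : X}
    (hz : z ≠ x₀) : ∑ x with g^[j] x = z, π x ≤ q ^ j * π z := by
  induction j generalizing z with
  | zero =>
    have hfiber : (univ.filter fun x => g^[0] x = z) = {z} := by
      ext
      rw [mem_filter, mem_singleton]
      simp
    rw [hfiber, sum_singleton, pow_zero, one_mul]
  | succ j ih =>
    have hmaps : ∀ x ∈ univ.filter (fun x => g^[j + 1] x = z),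
        g^[j] x ∈ ({y ∈ univ.erase x₀ | g y = z} : Finset X) := fun x hx => by
      have hx : g (g^[j] x) = z := by
        simpa only [mem_filter, mem_univ, true_and, Function.iterate_succ_apply'] using hx
      refine mem_filter.mpr ⟨mem_erase.mpr ⟨fun h => hz ?_, mem_univ _⟩, hx⟩
      rw [← hx, h, hfix]
    calc ∑ x with g^[j + 1] x = z, π x
        = ∑ y ∈ univ.erase x₀ with g y = z, ∑ x with g^[j] x = y, π x := by
          rw [← sum_fiberwise_of_maps_to hmaps]
          refine sum_congr rfl fun y hy => ?_
          rw [filter_filter]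
          congr 1
          ext x
          have hy : g y = z := (mem_filter.mp hy).2
          simp only [mem_filter, mem_univ, true_and, Function.iterate_succ_apply']
          exact ⟨fun h => h.2, fun h => ⟨h ▸ hy, h⟩⟩
      _ ≤ ∑ y ∈ univ.erase x₀ with g y = z, q ^ j * π y :=
          sum_le_sum fun y hy => ih (mem_erase.mp (mem_filter.mp hy).1).1
      _ ≤ q ^ (j + 1) * π z := by
          rw [← mul_sum, pow_succ, mul_assoc]
          exact mul_le_mul_of_nonneg_left (hfib z) (pow_nonneg hq j)

omit [Fintype X] [DecidableEq X] in
theorem sq_sub_iterate_le {l : ℝ} (hl0 : 0 < l) (hl1 : l < 1) (f : X → ℝ) (n : ℕ) (x : X) :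
    (f x - f (g^[n] x)) ^ 2 ≤
      (1 - l)⁻¹ * ∑ j ∈ range n, (f (g^[j] x) - f (g (g^[j] x))) ^ 2 / l ^ j := by
  have htel : f x - f (g^[n] x) = ∑ j ∈ range n, (f (g^[j] x) - f (g (g^[j] x))) := by
    simp only [← Function.iterate_succ_apply' g]
    exact (sum_range_sub' (fun j => f (g^[j] x)) n).symm
  rw [htel]
  calc _ ≤ (∑ j ∈ range n, l ^ j) *
        ∑ j ∈ range n, (f (g^[j] x) - f (g (g^[j] x))) ^ 2 / l ^ j :=
        sum_sq_le_sum_mul_sum_of_sq_le_mul _ (fun j _ => (pow_pos hl0 j).le)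
          (fun j _ => by positivity)
          (fun j _ => by rw [mul_div_cancel₀ _ (pow_ne_zero _ hl0.ne')])
    _ ≤ _ := mul_le_mul_of_nonneg_right (geom_sum_le_inv_one_sub hl0.le hl1 n)
        (sum_nonneg fun j _ => by positivity)

theorem sum_mul_comp_iterate_le (hfix : g x₀ = x₀) (hq : 0 ≤ q)
    (hfib : ∀ y, ∑ x ∈ univ.erase x₀ with g x = y, π x ≤ q * π y) {d : X → ℝ}
    (hd : ∀ x, 0 ≤ d x) (hdx₀ : d x₀ = 0) (j : ℕ) :
    ∑ x, π x * d (g^[j] x) ≤ q ^ j * ∑ z, π z * d z := by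
  rw [← sum_fiberwise univ (g^[j]), mul_sum]
  refine sum_le_sum fun z _ => ?_
  rw [sum_congr rfl fun x hx => by rw [(mem_filter.mp hx).2], ← sum_mul]
  rcases eq_or_ne z x₀ with rfl | hz
  · simp [hdx₀]
  · calc (∑ x with g^[j] x = z, π x) * d z ≤ q ^ j * π z * d z :=
          mul_le_mul_of_nonneg_right (sum_fiber_iterate_le hfix hq hfib j hz) (hd z)
      _ = q ^ j * (π z * d z) := mul_assoc _ _ _

theorem sum_mul_sq_sub_le_of_iterate {l : ℝ} (hl0 : 0 < l) (hl1 : l < 1) (hfix : g x₀ = x₀)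
    {n : ℕ} (hn : ∀ x, g^[n] x = x₀) (hπ0 : ∀ x, 0 ≤ π x)
    (hfib : ∀ y, ∑ x ∈ univ.erase x₀ with g x = y, π x ≤ l ^ 2 * π y) (f : X → ℝ) :
    ∑ x, π x * (f x - f x₀) ^ 2 ≤ (∑ z, π z * (f z - f (g z)) ^ 2) / (1 - l) ^ 2 := by
  set d : X → ℝ := fun z => (f z - f (g z)) ^ 2
  have hdecay := sum_mul_comp_iterate_le (d := d) hfix (sq_nonneg l) hfib (fun _ => sq_nonneg _)
    (by simp [d, hfix])
  have h1l : 0 < 1 - l := by linarith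
  calc ∑ x, π x * (f x - f x₀) ^ 2
      ≤ ∑ x, π x * ((1 - l)⁻¹ * ∑ j ∈ range n, d (g^[j] x) / l ^ j) :=
        sum_le_sum fun x _ => mul_le_mul_of_nonneg_left
          (hn x ▸ sq_sub_iterate_le hl0 hl1 f n x) (hπ0 x)
    _ = (1 - l)⁻¹ * ∑ j ∈ range n, (∑ x, π x * d (g^[j] x)) / l ^ j := by
        simp only [mul_sum, sum_div]
        rw [sum_comm]
        exact sum_congr rfl fun j _ => sum_congr rfl fun x _ => by ring
    _ ≤ (1 - l)⁻¹ * ∑ j ∈ range n, (l ^ 2) ^ j * (∑ z, π z * d z) / l ^ j := by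
        gcongr with j
        exact hdecay j
    _ = (1 - l)⁻¹ * ((∑ j ∈ range n, l ^ j) * ∑ z, π z * d z) := by
        rw [sum_mul]
        congr 1
        exact sum_congr rfl fun j _ => by field_simp; ring
    _ ≤ (1 - l)⁻¹ * ((1 - l)⁻¹ * ∑ z, π z * d z) := by
        gcongr
        · exact sum_nonneg fun z _ => mul_nonneg (hπ0 z) (sq_nonneg _)
        · exact geom_sum_le_inv_one_sub hl0.le hl1 n
    _ = (∑ z, π z * d z) / (1 - l) ^ 2 := by field_simp

end IteratedMap

section Metropolis

variable {X : Type*} [Fintype X] [DecidableEq X] {π : X → ℝ} {N : X → Finset X}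

omit [DecidableEq X] in
theorem card_le_Mmax (x : X) : (N x).card ≤ Mmax N :=
  Finset.le_sup (f := fun x => (N x).card) (mem_univ x)

theorem rwMH_apply_of_mem {x y : X} (hy : y ∈ N x) :
    rwMH π N x y = min ((N x).card : ℝ)⁻¹ (π y / (π x * (N y).card)) := if_pos hy

theorem rwMH_mem_rowStochastic (hπ : ∀ x, 0 < π x) (hNirr : ∀ x, x ∉ N x) :
    rwMH π N ∈ rowStochastic ℝ X := by
  have hacc_nonneg : ∀ x y, 0 ≤ min ((N x).card : ℝ)⁻¹ (π y / (π x * (N y).card)) := fun x y =>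
    le_min (by positivity) (div_nonneg (hπ y).le (mul_nonneg (hπ x).le (Nat.cast_nonneg _)))
  have hacc_sum : ∀ x, ∑ z ∈ N x, min ((N x).card : ℝ)⁻¹ (π z / (π x * (N z).card)) ≤ 1 :=
    fun x => by
      calc _ ≤ ∑ _z ∈ N x, ((N x).card : ℝ)⁻¹ := sum_le_sum fun z _ => min_le_left _ _
        _ ≤ 1 := by
          rw [sum_const, nsmul_eq_mul]
          exact mul_inv_le_one
  have hsplit : ∀ x y, rwMH π N x y =
      (if y ∈ N x then min ((N x).card : ℝ)⁻¹ (π y / (π x * (N y).card)) else 0) +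
      (if y = x then 1 - ∑ z ∈ N x, min ((N x).card : ℝ)⁻¹ (π z / (π x * (N z).card)) else 0) :=
    fun x y => by
      by_cases hy : y ∈ N x
      · simp [rwMH, hy, show y ≠ x from fun h => hNirr x (h ▸ hy)]
      · simp [rwMH, hy]
  refine mem_rowStochastic_iff_sum.mpr ⟨fun x y => ?_, fun x => ?_⟩
  · rw [hsplit]
    refine add_nonneg ?_ ?_ <;> split_ifs <;> linarith [hacc_nonneg x y, hacc_sum x]
  · simp only [hsplit, sum_add_distrib, sum_ite_mem, univ_inter, sum_ite_eq', mem_univ, if_true]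
    ring

theorem rwMH_isReversible (hπ : ∀ x, 0 < π x) (hNsym : ∀ x y, y ∈ N x → x ∈ N y) :
    (rwMH π N).IsReversible π := by
  intro x y
  by_cases hy : y ∈ N x
  · have e₁ : π x * (π y / (π x * (N y).card)) = π y * ((N y).card : ℝ)⁻¹ := by
      field_simp [(hπ x).ne']
    have e₂ : π y * (π x / (π y * (N x).card)) = π x * ((N x).card : ℝ)⁻¹ := by
      field_simp [(hπ y).ne']
    rw [rwMH_apply_of_mem hy, rwMH_apply_of_mem (hNsym x y hy),
      mul_min_of_nonneg _ _ (hπ x).le, mul_min_of_nonneg _ _ (hπ y).le, e₁, e₂, min_comm]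
  · have hx : x ∉ N y := fun h => hy (hNsym y x h)
    by_cases hxy : x = y
    · rw [hxy]
    · simp [rwMH, hy, hx, hxy, Ne.symm hxy]

theorem inv_Mmax_le_rwMH_apply (hπ : ∀ x, 0 < π x) (hNsym : ∀ x y, y ∈ N x → x ∈ N y)
    {x y : X} (hy : y ∈ N x) (hxy : π x ≤ π y) : ((Mmax N : ℕ) : ℝ)⁻¹ ≤ rwMH π N x y := by
  have hcard_pos : ∀ {a b : X}, b ∈ N a → (0 : ℝ) < (N a).card := fun h =>
    Nat.cast_pos.mpr (card_pos.mpr ⟨_, h⟩)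
  have hx := hcard_pos hy
  have hy' := hcard_pos (hNsym x y hy)
  have hMx : ((N x).card : ℝ) ≤ Mmax N := by exact_mod_cast card_le_Mmax x
  have hMy : ((N y).card : ℝ) ≤ Mmax N := by exact_mod_cast card_le_Mmax y
  rw [rwMH_apply_of_mem hy]
  refine le_min (inv_anti₀ hx hMx) ?_
  calc ((Mmax N : ℕ) : ℝ)⁻¹ ≤ ((N y).card : ℝ)⁻¹ := inv_anti₀ hy' hMy
    _ ≤ π y / (π x * (N y).card) := by
      rw [le_div_iff₀ (mul_pos (hπ x) hy'), mul_comm (π x), ← mul_assoc,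
        inv_mul_cancel₀ hy'.ne', one_mul]
      exact hxy

end Metropolis

section UphillMap

variable {X : Type*} [Fintype X] [DecidableEq X] {π : X → ℝ} {N : X → Finset X}

structure IsUphillMap (π : X → ℝ) (N : X → Finset X) (R : ℝ) (x₀ : X) (g : X → X) : Prop where
  map_base : g x₀ = x₀
  mem_nbhd : ∀ x, x ≠ x₀ → g x ∈ N x
  mul_le : ∀ x, x ≠ x₀ → R * π x ≤ π (g x)

omit [DecidableEq X] in
theorem exists_mem_nbhd_le_div_of_Rval_pos {x₀ x : X} (hR : 0 < Rval π N x₀) (hx : x ≠ x₀) :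
    ∃ y ∈ N x, Rval π N x₀ ≤ π y / π x := by
  have hle : Rval π N x₀ ≤ sSup ((fun y => π y / π x) '' (N x : Set X)) :=
    csInf_le (Set.Finite.bddBelow (Set.toFinite _)) ⟨x, hx, rfl⟩
  have hne : ((fun y => π y / π x) '' (N x : Set X)).Nonempty := by
    by_contra h
    rw [Set.not_nonempty_iff_eq_empty.mp h, Real.sSup_empty] at hle
    linarith
  obtain ⟨y, hy, hmax⟩ := hne.csSup_mem (Set.toFinite _)
  exact ⟨y, hy, hle.trans_eq hmax.symm⟩

omit [DecidableEq X] in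
theorem exists_isUphillMap (hπ : ∀ x, 0 < π x) {x₀ : X} (hR : 0 < Rval π N x₀) :
    ∃ g, IsUphillMap π N (Rval π N x₀) x₀ g := by
  classical
  choose! g hgN hgR using fun x (hx : x ≠ x₀) => exists_mem_nbhd_le_div_of_Rval_pos hR hx
  refine ⟨fun x => if x = x₀ then x₀ else g x, if_pos rfl, fun x hx => ?_, fun x hx => ?_⟩
  · simpa [hx] using hgN x hx
  · simpa [hx, le_div_iff₀ (hπ x)] using hgR x hx

omit [DecidableEq X] in
theorem exists_ne_of_Rval_pos {x₀ : X} (hR : 0 < Rval π N x₀) : ∃ x, x ≠ x₀ := by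
  by_contra! h
  have : {x | x ≠ x₀} = ∅ := Set.eq_empty_of_forall_notMem (by simpa using h)
  simp [Rval, this] at hR

namespace IsUphillMap

variable {R : ℝ} {x₀ : X} {g : X → X}

omit [Fintype X] [DecidableEq X] in
theorem lt_apply (hg : IsUphillMap π N R x₀ g) (hπ : ∀ x, 0 < π x) (hR : 1 < R) {x : X}
    (hx : x ≠ x₀) : π x < π (g x) := by
  nlinarith [hg.mul_le x hx, hπ x]

omit [DecidableEq X] in
theorem exists_iterate_eq (hg : IsUphillMap π N R x₀ g) (hπ : ∀ x, 0 < π x) (hR : 1 < R) :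
    ∃ n, ∀ x, g^[n] x = x₀ := by
  have hreach : ∀ x, ∃ k, g^[k] x = x₀ := fun x => by
    by_contra! h
    have hmono : StrictMono fun k => π (g^[k] x) := strictMono_nat_of_lt_succ fun k => by
      simpa only [Function.iterate_succ_apply'] using hg.lt_apply hπ hR (h k)
    exact not_injective_infinite_finite _ (hmono.injective.of_comp (f := π))
  choose k hk using hreach
  refine ⟨univ.sup k, fun x => ?_⟩
  rw [← Nat.sub_add_cancel (le_sup (f := k) (mem_univ x)), Function.iterate_add_apply, hk x,
    Function.iterate_fixed hg.map_base]

theorem sum_fiber_le (hg : IsUphillMap π N R x₀ g) (hπ : ∀ x, 0 < π x) (hR : 0 < R)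
    (hNsym : ∀ x y, y ∈ N x → x ∈ N y) (y : X) :
    ∑ x ∈ univ.erase x₀ with g x = y, π x ≤ Mmax N / R * π y := by
  have hsub : {x ∈ univ.erase x₀ | g x = y} ⊆ N y := fun x hx => by
    obtain ⟨hmem, rfl⟩ := mem_filter.mp hx
    exact hNsym _ _ (hg.mem_nbhd x (ne_of_mem_erase hmem))
  calc ∑ x ∈ univ.erase x₀ with g x = y, π x
      ≤ ∑ x ∈ univ.erase x₀ with g x = y, π y / R := sum_le_sum fun x hx => by
        obtain ⟨hmem, rfl⟩ := mem_filter.mp hx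
        rw [le_div_iff₀ hR, mul_comm]
        exact hg.mul_le x (ne_of_mem_erase hmem)
    _ ≤ (N y).card * (π y / R) := by
        rw [sum_const, nsmul_eq_mul]
        exact mul_le_mul_of_nonneg_right (by exact_mod_cast card_le_card hsub)
          (div_nonneg (hπ y).le hR.le)
    _ ≤ Mmax N / R * π y := by
        rw [mul_div_assoc', div_mul_eq_mul_div]
        exact div_le_div_of_nonneg_right (mul_le_mul_of_nonneg_right
          (by exact_mod_cast card_le_Mmax y) (hπ y).le) hR.le

end IsUphillMap

end UphillMap

section MetropolisPoincare

variable {X : Type*} [Fintype X] [DecidableEq X] {π : X → ℝ} {N : X → Finset X}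

theorem varianceForm_le_dirichletForm_lazyM_rwMH (hπ : ∀ x, 0 < π x) (hπsum : ∑ x, π x = 1)
    (hNirr : ∀ x, x ∉ N x) (hNsym : ∀ x y, y ∈ N x → x ∈ N y) {R l : ℝ} {x₀ : X} {g : X → X}
    (hg : IsUphillMap π N R x₀ g) (hR : 1 < R) (hl0 : 0 < l) (hl1 : l < 1)
    (hl : l ^ 2 = Mmax N / R) (f : X → ℝ) :
    varianceForm π f ≤ 2 * Mmax N / (1 - l) ^ 2 * dirichletForm (lazyM (rwMH π N)) π f := by
  set P := lazyM (rwMH π N)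
  have hrow : P ∈ rowStochastic ℝ X :=
    lazyM_mem_rowStochastic (rwMH_mem_rowStochastic hπ hNirr)
  obtain ⟨n, hn⟩ := hg.exists_iterate_eq hπ hR
  have hfib : ∀ y, ∑ x ∈ univ.erase x₀ with g x = y, π x ≤ l ^ 2 * π y := fun y =>
    hl ▸ hg.sum_fiber_le hπ (by linarith) hNsym y
  have hedge : ∀ z ∈ univ.erase x₀, π z * (f z - f (g z)) ^ 2 ≤
      2 * Mmax N * (π z * P z (g z) * (f z - f (g z)) ^ 2) := fun z hz => by
    have hz := ne_of_mem_erase hz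
    have hgz := hg.mem_nbhd z hz
    have hM : (0 : ℝ) < Mmax N :=
      Nat.cast_pos.mpr ((card_pos.mpr ⟨_, hgz⟩).trans_le (card_le_Mmax z))
    have hPz : P z (g z) = 2⁻¹ * rwMH π N z (g z) := by
      simp [P, lazyM, one_apply, show z ≠ g z from fun h => hNirr z (by rwa [← h] at hgz)]
    have hacc := inv_Mmax_le_rwMH_apply hπ hNsym hgz (hg.lt_apply hπ hR hz).le
    have hone : 1 ≤ 2 * Mmax N * P z (g z) := by
      calc (1 : ℝ) = Mmax N * (Mmax N : ℝ)⁻¹ := (mul_inv_cancel₀ hM.ne').symm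
        _ ≤ Mmax N * rwMH π N z (g z) := by gcongr
        _ = 2 * Mmax N * P z (g z) := by rw [hPz]; ring
    calc π z * (f z - f (g z)) ^ 2 ≤ 2 * Mmax N * P z (g z) * (π z * (f z - f (g z)) ^ 2) :=
          le_mul_of_one_le_left (mul_nonneg (hπ z).le (sq_nonneg _)) hone
      _ = _ := by ring
  have hno2cycle : ∀ z ∈ univ.erase x₀, ∀ w ∈ univ.erase x₀, g z = w → g w ≠ z := by
    rintro z hz w hw rfl h
    have h₁ := hg.lt_apply hπ hR (ne_of_mem_erase hz)
    have h₂ := hg.lt_apply hπ hR (ne_of_mem_erase hw)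
    rw [h] at h₂
    linarith
  calc varianceForm π f ≤ ∑ x, π x * (f x - f x₀) ^ 2 :=
        varianceForm_le_sum_mul_sq_sub hπsum f (f x₀)
    _ ≤ (∑ z, π z * (f z - f (g z)) ^ 2) / (1 - l) ^ 2 :=
        sum_mul_sq_sub_le_of_iterate hl0 hl1 hg.map_base hn (fun x => (hπ x).le) hfib f
    _ = (∑ z ∈ univ.erase x₀, π z * (f z - f (g z)) ^ 2) / (1 - l) ^ 2 := by
        rw [sum_erase _ (by simp [hg.map_base])]
    _ ≤ 2 * Mmax N * dirichletForm P π f / (1 - l) ^ 2 := by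
        gcongr
        calc _ ≤ ∑ z ∈ univ.erase x₀, 2 * Mmax N * (π z * P z (g z) * (f z - f (g z)) ^ 2) :=
              sum_le_sum hedge
          _ ≤ 2 * Mmax N * dirichletForm P π f := by
              rw [← mul_sum]
              exact mul_le_mul_of_nonneg_left (sum_mul_sq_sub_le_dirichletForm
                (rwMH_isReversible hπ hNsym).lazyM (fun _ _ => nonneg_of_mem_rowStochastic hrow)
                (fun x => (hπ x).le) g _ hno2cycle f) (by positivity)
    _ = 2 * Mmax N / (1 - l) ^ 2 * dirichletForm P π f := by ring

end MetropolisPoincare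

theorem one_le_and_lt_of_one_lt_div {n : ℕ} {R : ℝ} (h : 1 < R / n) :
    1 ≤ (n : ℝ) ∧ (n : ℝ) < R := by
  have hn : 1 ≤ (n : ℝ) := Nat.one_le_cast.mpr (Nat.pos_of_ne_zero fun h0 => by
    simp [h0] at h
    linarith)
  exact ⟨hn, (one_lt_div (by linarith)).mp h⟩

theorem rpow_neg_two_inv_sq {ρ : ℝ} (hρ : 0 ≤ ρ) : (ρ ^ (-(2 : ℝ)⁻¹)) ^ 2 = ρ⁻¹ := by
  rw [← Real.rpow_natCast, ← Real.rpow_mul hρ]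
  norm_num [Real.rpow_neg_one]

theorem one_le_two_mul_div_sq {M l : ℝ} (hM : 1 ≤ M) (hl0 : 0 ≤ l) (hl1 : l < 1) :
    1 ≤ 2 * M / (1 - l) ^ 2 := by
  rw [le_div_iff₀ (pow_pos (sub_pos.mpr hl1) 2)]
  nlinarith

theorem two_mul_div_sq_le_cFun {ρ M : ℝ} (hρ : 1 < ρ) (hM : 0 ≤ M) :
    2 * (2 * M / (1 - ρ ^ (-(2 : ℝ)⁻¹)) ^ 2) ≤ cFun ρ * M := by
  have hl0 : 0 ≤ ρ ^ (-(2 : ℝ)⁻¹) := Real.rpow_nonneg (by linarith) _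
  have h1l : 0 < 1 - ρ ^ (-(2 : ℝ)⁻¹) :=
    sub_pos.mpr (Real.rpow_lt_one_of_one_lt_of_neg hρ (by norm_num))
  calc 2 * (2 * M / (1 - ρ ^ (-(2 : ℝ)⁻¹)) ^ 2) = 4 * M / (1 - ρ ^ (-(2 : ℝ)⁻¹)) ^ 2 := by ring
    _ ≤ 4 * M / (1 - ρ ^ (-(2 : ℝ)⁻¹)) ^ 3 := div_le_div_of_nonneg_left (by linarith)
        (pow_pos h1l 3) (pow_le_pow_of_le_one h1l.le (by linarith) (by norm_num))
    _ = cFun ρ * M := by rw [cFun]; ring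

theorem stmt0_general {X : Type*} [Fintype X] [DecidableEq X] [Nonempty X]
    (π : X → ℝ) (hπpos : ∀ x, 0 < π x) (hπsum : ∑ x, π x = 1)
    (N : X → Finset X)
    (hNirr : ∀ x, x ∉ N x)
    (hNsym : ∀ x y, y ∈ N x → x ∈ N y)
    (xstar : X)
    (ρ : ℝ) (hρdef : ρ = Rval π N xstar / (Mmax N : ℝ)) (hρ : 1 < ρ) :
    1 - ρ⁻¹ ≤ π xstar ∧
    1 / (cFun ρ * (Mmax N : ℝ)) ≤ specGap (lazyM (rwMH π N)) π ∧
    ∀ ε : ℝ, 0 < ε → ε < 1 / 2 →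
      (mixTime (lazyM (rwMH π N)) π ε : ℝ) ≤
        cFun ρ * (Mmax N : ℝ) * Real.log (1 / (ε * piMin π)) := by
  obtain ⟨hM, hMR⟩ := one_le_and_lt_of_one_lt_div (hρdef ▸ hρ)
  have hR : 0 < Rval π N xstar := by linarith
  obtain ⟨x₁, hx₁⟩ := exists_ne_of_Rval_pos hR
  obtain ⟨g, hg⟩ := exists_isUphillMap hπpos hR
  have hl0 : 0 < ρ ^ (-(2 : ℝ)⁻¹) := Real.rpow_pos_of_pos (by linarith) _
  have hl1 : ρ ^ (-(2 : ℝ)⁻¹) < 1 := Real.rpow_lt_one_of_one_lt_of_neg hρ (by norm_num)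
  have hl : (ρ ^ (-(2 : ℝ)⁻¹)) ^ 2 = Mmax N / Rval π N xstar := by
    rw [rpow_neg_two_inv_sq (by linarith), hρdef, inv_div]
  have hpoinc := varianceForm_le_dirichletForm_lazyM_rwMH hπpos hπsum hNirr hNsym hg
    (by linarith) hl0 hl1 hl
  have hK := one_le_two_mul_div_sq hM hl0.le hl1
  have hKC := two_mul_div_sq_le_cFun hρ (by linarith : (0 : ℝ) ≤ Mmax N)
  have hrow := rwMH_mem_rowStochastic hπpos hNirr
  have hrev := rwMH_isReversible hπpos hNsym
  refine ⟨?_, ?_, fun ε hε hε2 => ?_⟩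
  · rw [hρdef, inv_div]
    exact one_sub_le_of_sum_fiber_le hπsum (hg.sum_fiber_le hπpos hR hNsym)
  · exact (one_div_le_one_div_of_le (by linarith) (by linarith)).trans
      (le_specGap_of_poincare hπpos hx₁ (by linarith) hpoinc)
  · exact mixTime_lazyM_le_mul_log hrow hrev hπpos hπsum hK hKC hε (by linarith) hpoinc

theorem stmt0 {X : Type*} [Fintype X] [DecidableEq X] [Nonempty X]
    (π : X → ℝ) (hπpos : ∀ x, 0 < π x) (hπsum : ∑ x, π x = 1)
    (N : X → Finset X)
    (hNirr : ∀ x, x ∉ N x)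
    (hNsym : ∀ x y, y ∈ N x → x ∈ N y)
    (hNconn : ∀ x y : X, Relation.ReflTransGen (fun a b => b ∈ N a) x y)
    (xstar : X) (hxstar : ∀ x, π x ≤ π xstar)
    (ρ : ℝ) (hρdef : ρ = Rval π N xstar / (Mmax N : ℝ)) (hρ : 1 < ρ) :
    1 - ρ⁻¹ ≤ π xstar ∧
    1 / (cFun ρ * (Mmax N : ℝ)) ≤ specGap (lazyM (rwMH π N)) π ∧
    ∀ ε : ℝ, 0 < ε → ε < 1 / 2 →
      (mixTime (lazyM (rwMH π N)) π ε : ℝ) ≤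
        cFun ρ * (Mmax N : ℝ) * Real.log (1 / (ε * piMin π)) :=
  stmt0_general π hπpos hπsum N hNirr hNsym xstar ρ hρdef hρ
end

section
/- Let x' ∈ N(x). Assume that Z_h(x) ≥ L and π(x')/π(x) ≥ ℓ ≥ M. Then (π(x')·K_h(x',x))/(π(x)·K_h(x,x')) ≥ 1; that is, an informed proposal from x to x' has Metropolis–Hastings acceptance probability 1. -/
open Finset

theorem stmt1 {X : Type*} [Fintype X] [DecidableEq X] [Nonempty X]
    (π : X → ℝ) (hπpos : ∀ x, 0 < π x) (hπsum : ∑ x, π x = 1)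
    (N : X → Finset X)
    (hNirr : ∀ x, x ∉ N x)
    (hNsym : ∀ x y, y ∈ N x → x ∈ N y)
    (hNconn : ∀ x y : X, Relation.ReflTransGen (fun a b => b ∈ N a) x y)
    (l L : ℝ) (hl : 0 < l) (hlL : l < L)
    (x x' : X) (hmem : x' ∈ N x)
    (hZ : L ≤ Zh π N l L x)
    (hlower : l ≤ π x' / π x)
    (hlM : (Mmax N : ℝ) ≤ l) :
    1 ≤ (π x' * Kh π N l L x' x) / (π x * Kh π N l L x x') := by
  have hlL' : l ≤ L := le_of_lt hlL
  have hmem' : x ∈ N x' := hNsym x x' hmem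
  have hpx := hπpos x
  have hpx' := hπpos x'
  have hM1 : (1:ℝ) ≤ l := by
    have h1 : 1 ≤ (N x).card := Finset.card_pos.mpr ⟨x', hmem⟩
    have h2 : (N x).card ≤ Mmax N := Finset.le_sup (f := fun z => (N z).card) (Finset.mem_univ x)
    calc (1:ℝ) ≤ ((N x).card : ℝ) := by exact_mod_cast h1
      _ ≤ (Mmax N : ℝ) := by exact_mod_cast h2
      _ ≤ l := hlM
  have clip_ge : ∀ u : ℝ, l ≤ clip l L u := by
    intro u; unfold clip; split_ifs with h1 h2
    · exact le_rfl
    · linarith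
    · exact hlL'
  have clip_le_L : ∀ u : ℝ, clip l L u ≤ L := by
    intro u; unfold clip; split_ifs with h1 h2
    · exact hlL'
    · exact h2
    · exact le_rfl
  have clip_le_self : ∀ u : ℝ, l ≤ u → clip l L u ≤ u := by
    intro u hu; unfold clip; split_ifs with h1 h2
    · linarith
    · exact le_rfl
    · linarith
  have clip_eq_l : ∀ u : ℝ, u ≤ l → clip l L u = l := by
    intro u hu; unfold clip; split_ifs with h1 h2
    · rfl
    · linarith
    · linarith
  have hZxpos : 0 < Zh π N l L x := by
    refine lt_of_lt_of_le ?_ hZ; linarith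
  have hZx'pos : 0 < Zh π N l L x' := by
    unfold Zh
    refine Finset.sum_pos (fun y _ => lt_of_lt_of_le hl (clip_ge _)) ⟨x, hmem'⟩
  have hZx'le : Zh π N l L x' ≤ l * Zh π N l L x := by
    have h1 : Zh π N l L x' ≤ ((N x').card : ℝ) * L := by
      unfold Zh
      calc ∑ y ∈ N x', clip l L (π y / π x') ≤ ∑ _y ∈ N x', L :=
            Finset.sum_le_sum (fun y _ => clip_le_L _)
        _ = ((N x').card : ℝ) * L := by rw [Finset.sum_const, nsmul_eq_mul]
    have h2 : ((N x').card : ℝ) ≤ l := by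
      refine le_trans ?_ hlM
      exact_mod_cast Finset.le_sup (f := fun z => (N z).card) (Finset.mem_univ x')
    calc Zh π N l L x' ≤ ((N x').card : ℝ) * L := h1
      _ ≤ l * L := by nlinarith
      _ ≤ l * Zh π N l L x := by nlinarith
  have hxx' : π x / π x' ≤ l := by
    have h1 : l * π x ≤ π x' := (le_div_iff₀ hpx).mp hlower
    have h2 : π x / π x' ≤ 1 := (div_le_one hpx').mpr (by nlinarith)
    linarith
  have hclipba : clip l L (π x / π x') = l := clip_eq_l _ hxx'
  have hKab : Kh π N l L x x' = clip l L (π x' / π x) / Zh π N l L x := by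
    unfold Kh; rw [if_pos hmem]
  have hKba : Kh π N l L x' x = l / Zh π N l L x' := by
    unfold Kh; rw [if_pos hmem', hclipba]
  rw [hKab, hKba]
  have hclippos : 0 < clip l L (π x' / π x) := lt_of_lt_of_le hl (clip_ge _)
  rw [one_le_div (by positivity)]
  rw [mul_div_assoc', mul_div_assoc', div_le_div_iff₀ hZxpos hZx'pos]
  have hA : π x * clip l L (π x' / π x) ≤ π x' := by
    have := clip_le_self _ hlower
    calc π x * clip l L (π x' / π x) ≤ π x * (π x' / π x) := by nlinarith
      _ = π x' := by field_simp
  nlinarith [mul_le_mul hA hZx'le (le_of_lt hZx'pos) (le_of_lt hpx')]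
end

section
/- Assume R > M², ℓ = M, M² < L ≤ R, and set S = L/M. Then for every x ∈ X with x ≠ x*, the informed Metropolis–Hastings chain satisfies P_h(x, N_S(x)) ≥ 1/2, where N_S(x) = {x' ∈ N(x) : π(x')/π(x) ≥ S} and P_h(x, A) = Σ_{x'∈A} P_h(x,x'). -/
open Finset

section auxlemmas

lemma clip_le_right' {l L u : ℝ} (h : l ≤ L) : clip l L u ≤ L := by
  unfold clip; split_ifs <;> linarith

lemma le_clip' {l L u : ℝ} (h : l ≤ L) : l ≤ clip l L u := by
  unfold clip; split_ifs <;> linarith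

lemma clip_of_ge' {l L u : ℝ} (hlL : l ≤ L) (h : L ≤ u) : clip l L u = L := by
  unfold clip; split_ifs <;> linarith

lemma clip_of_lt' {l L u : ℝ} (h : u < l) : clip l L u = l := by
  unfold clip; rw [if_pos h]

lemma clip_le_self' {l L u : ℝ} (h : l ≤ u) : clip l L u ≤ u := by
  unfold clip; split_ifs <;> linarith

lemma clip_le_of_lt' {l L u S : ℝ} (hl : l ≤ S) (hu : u < S) (hSL : S ≤ L) :
    clip l L u ≤ S := by
  unfold clip; split_ifs <;> linarith

end auxlemmas

theorem stmt3 {X : Type*} [Fintype X] [DecidableEq X] [Nonempty X]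
    (π : X → ℝ) (hπpos : ∀ x, 0 < π x) (hπsum : ∑ x, π x = 1)
    (N : X → Finset X)
    (hNirr : ∀ x, x ∉ N x)
    (hNsym : ∀ x y, y ∈ N x → x ∈ N y)
    (hNconn : ∀ x y : X, Relation.ReflTransGen (fun a b => b ∈ N a) x y)
    (xstar : X) (hxstar : ∀ x, π x ≤ π xstar)
    (hRM : ((Mmax N : ℝ)) ^ 2 < Rval π N xstar)
    (L : ℝ) (hL1 : ((Mmax N : ℝ)) ^ 2 < L) (hL2 : L ≤ Rval π N xstar)
    (x : X) (hx : x ≠ xstar) :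
    1 / 2 ≤ ∑ y ∈ NS π N (L / (Mmax N : ℝ)) x, infMH π N (Mmax N) L x y := by
  set M : ℝ := (Mmax N : ℝ) with hMdef
  set S : ℝ := L / M with hSdef
  have hNxne : (N x).Nonempty := by
    rcases (hNconn x xstar).cases_head with h | ⟨b, hb, _⟩
    · exact absurd h hx
    · exact ⟨b, hb⟩
  have hcard_le : ∀ z : X, ((N z).card : ℝ) ≤ M := by
    intro z
    rw [hMdef]
    unfold Mmax
    exact_mod_cast Finset.le_sup (f := fun z => (N z).card) (Finset.mem_univ z)
  have hM1 : (1 : ℝ) ≤ M := by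
    have h1 : 1 ≤ (N x).card := Finset.card_pos.2 hNxne
    calc (1:ℝ) ≤ ((N x).card : ℝ) := by exact_mod_cast h1
    _ ≤ M := hcard_le x
  have hMpos : (0:ℝ) < M := zero_lt_one.trans_le hM1
  have hML : M ≤ L := by nlinarith
  have hLpos : (0:ℝ) < L := hMpos.trans_le hML
  have hSpos : 0 < S := div_pos hLpos hMpos
  have hMS : M < S := by
    rw [hSdef, lt_div_iff₀ hMpos]; nlinarith
  have hSL : S ≤ L := by
    rw [hSdef, div_le_iff₀ hMpos]; nlinarith
  -- good neighbor y₀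
  obtain ⟨y₀, hy₀N, hy₀⟩ : ∃ y ∈ N x, L ≤ π y / π x := by
    have h1 : Rval π N xstar ≤ sSup ((fun y => π y / π x) '' (N x : Set X)) := by
      apply csInf_le ((Set.toFinite _).bddBelow)
      exact ⟨x, hx, rfl⟩
    have hfin : ((fun y => π y / π x) '' (N x : Set X)).Finite := Set.toFinite _
    have hne : ((fun y => π y / π x) '' (N x : Set X)).Nonempty :=
      (Finset.coe_nonempty.mpr hNxne).image _
    obtain ⟨y₀, hy₀N, heq⟩ := hne.csSup_mem hfin
    refine ⟨y₀, hy₀N, ?_⟩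
    have h2 := hL2.trans h1
    rw [← heq] at h2
    exact h2
  have hπx := hπpos x
  -- Zh bounds
  have hZle : ∀ z : X, Zh π N M L z ≤ L * M := by
    intro z
    calc Zh π N M L z ≤ ∑ _y ∈ N z, L :=
          Finset.sum_le_sum fun y _ => clip_le_right' hML
    _ = ((N z).card : ℝ) * L := by rw [Finset.sum_const, nsmul_eq_mul]
    _ ≤ M * L := mul_le_mul_of_nonneg_right (hcard_le z) hLpos.le
    _ = L * M := mul_comm _ _
  have hZpos : ∀ z : X, (N z).Nonempty → 0 < Zh π N M L z := by
    intro z hz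
    exact Finset.sum_pos (fun y _ => hMpos.trans_le (le_clip' hML)) hz
  have hZxL : L ≤ Zh π N M L x := by
    have h := Finset.single_le_sum (f := fun y => clip M L (π y / π x))
      (fun y _ => (hMpos.le.trans (le_clip' hML))) hy₀N
    exact le_trans (le_of_eq (clip_of_ge' hML hy₀).symm) h
  have hZx : 0 < Zh π N M L x := hLpos.trans_le hZxL
  -- NS as filter
  have hNSx : NS π N S x = (N x).filter (fun y => S ≤ π y / π x) := rfl
  set G : ℝ := ∑ y ∈ NS π N S x, clip M L (π y / π x) with hG
  set B : ℝ := ∑ y ∈ (N x).filter (fun y => ¬ S ≤ π y / π x), clip M L (π y / π x) with hB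
  have hsplit : Zh π N M L x = G + B := by
    rw [hG, hB, hNSx]
    exact (Finset.sum_filter_add_sum_filter_not (N x) _ _).symm
  have hy₀NS : y₀ ∈ NS π N S x := by
    rw [hNSx, Finset.mem_filter]; exact ⟨hy₀N, hSL.trans hy₀⟩
  have hGL : L ≤ G := by
    have h := Finset.single_le_sum (f := fun y => clip M L (π y / π x))
      (fun y _ => (hMpos.le.trans (le_clip' hML))) hy₀NS
    exact le_trans (le_of_eq (clip_of_ge' hML hy₀).symm) h
  have hBbound : B ≤ (M - 1) * S := by
    have hcards : ((N x).filter (fun y => ¬ S ≤ π y / π x)).card + 1 ≤ (N x).card := by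
      have h1 : 0 < ((N x).filter (fun y => S ≤ π y / π x)).card :=
        Finset.card_pos.2 ⟨y₀, by rw [← hNSx]; exact hy₀NS⟩
      have h2 := Finset.card_filter_add_card_filter_not
        (s := N x) (p := fun y => S ≤ π y / π x)
      omega
    have hcardsR : (((N x).filter (fun y => ¬ S ≤ π y / π x)).card : ℝ) ≤ M - 1 := by
      have := hcard_le x
      have h3 : ((((N x).filter (fun y => ¬ S ≤ π y / π x)).card : ℕ) : ℝ) + 1
          ≤ ((N x).card : ℝ) := by exact_mod_cast hcards
      linarith
    calc B ≤ ∑ _y ∈ (N x).filter (fun y => ¬ S ≤ π y / π x), S := by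
          apply Finset.sum_le_sum
          intro y hy
          rw [Finset.mem_filter] at hy
          exact clip_le_of_lt' hMS.le (not_le.1 hy.2) hSL
    _ = (((N x).filter (fun y => ¬ S ≤ π y / π x)).card : ℝ) * S := by
          rw [Finset.sum_const, nsmul_eq_mul]
    _ ≤ (M - 1) * S := mul_le_mul_of_nonneg_right hcardsR hSpos.le
  have hMSL : (M - 1) * S ≤ L := by
    have : M * S = L := by
      rw [hSdef]; field_simp
    nlinarith
  have hBG : B ≤ G := le_trans hBbound (le_trans hMSL hGL)
  -- each term of the sum equals Kh x y
  have hterm : ∀ y ∈ NS π N S x, infMH π N M L x y = clip M L (π y / π x) / Zh π N M L x := by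
    intro y hy
    rw [hNSx, Finset.mem_filter] at hy
    obtain ⟨hyN, hyS⟩ := hy
    have hyx : y ≠ x := fun h => hNirr x (h ▸ hyN)
    have hπy := hπpos y
    have hr : S ≤ π y / π x := hyS
    have hπxy : π x < π y := by
      have h1 : 1 < π y / π x := lt_of_lt_of_le (hM1.trans_lt hMS) hr
      rwa [lt_div_iff₀ hπx, one_mul] at h1
    have hxNy : x ∈ N y := hNsym x y hyN
    have hNyne : (N y).Nonempty := ⟨x, hxNy⟩
    have hZy : 0 < Zh π N M L y := hZpos y hNyne
    have hKxy : Kh π N M L x y = clip M L (π y / π x) / Zh π N M L x := by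
      unfold Kh; rw [if_pos hyN]
    have hKyx : Kh π N M L y x = M / Zh π N M L y := by
      unfold Kh
      rw [if_pos hxNy, clip_of_lt']
      have : π x / π y < 1 := (div_lt_one hπy).2 hπxy
      linarith
    have hKxypos : 0 < Kh π N M L x y := by
      rw [hKxy]
      exact div_pos (hMpos.trans_le (le_clip' hML)) hZx
    have hacc : 1 ≤ (π y * Kh π N M L y x) / (π x * Kh π N M L x y) := by
      rw [one_le_div (mul_pos hπx hKxypos), hKxy, hKyx]
      rw [← mul_div_assoc, ← mul_div_assoc, div_le_div_iff₀ hZx hZy]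
      have hcr : clip M L (π y / π x) ≤ π y / π x :=
        clip_le_self' (le_trans hMS.le hr)
      have heq : π x * (π y / π x) = π y := by field_simp
      have hc0 : (0:ℝ) ≤ clip M L (π y / π x) := hMpos.le.trans (le_clip' hML)
      calc π x * clip M L (π y / π x) * Zh π N M L y
          ≤ π x * clip M L (π y / π x) * (L * M) :=
            mul_le_mul_of_nonneg_left (hZle y) (by positivity)
        _ ≤ π x * (π y / π x) * (L * M) :=
            mul_le_mul_of_nonneg_right (mul_le_mul_of_nonneg_left hcr hπx.le)
              (by positivity)
        _ = π y * (L * M) := by rw [heq]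
        _ = π y * M * L := by ring
        _ ≤ π y * M * Zh π N M L x := by
            apply mul_le_mul_of_nonneg_left hZxL (by positivity)
    have hmin : min 1 ((π y * Kh π N M L y x) / (π x * Kh π N M L x y)) = 1 :=
      min_eq_left hacc
    show (Matrix.of _ : Matrix X X ℝ) x y = _
    rw [Matrix.of_apply]
    simp only [if_neg hyx]
    rw [hmin, mul_one, hKxy]
  calc (1:ℝ) / 2 ≤ G / Zh π N M L x := by
        rw [le_div_iff₀ hZx]; linarith [hsplit, hBG]
  _ = ∑ y ∈ NS π N S x, infMH π N M L x y := by
        rw [hG, Finset.sum_div]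
        exact Finset.sum_congr rfl fun y hy => (hterm y hy).symm
end

section
/- Let E ⊆ Ē, w : E → (0,∞), and φ : Γ_E → [0,∞), and set Φ(x,x') = Σ_{γ∈Γ_E(x,x')} φ(γ) if Γ_E(x,x') ≠ ∅ and Φ(x,x') = 0 otherwise. Then for every f : X → ℝ, Σ_{x,x'∈X} |f(x) − f(x')|²·Φ(x,x') ≤ A(E,w,φ)·Σ_{(x,x')∈E} Q((x,x'))·|f(x) − f(x')|². -/
open Finset

section AuxPathLemmas
variable {X : Type*}

lemma edgeList_reconstruct : ∀ (γ : List X) (x : X), γ.head? = some x →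
    γ = x :: (edgeList γ).map Prod.snd
  | [], x, h => by simp at h
  | [a], x, h => by simp at h; simp [h, edgeList]
  | a :: b :: r, x, h => by
    simp only [List.head?_cons, Option.some.injEq] at h
    subst h
    have IH := edgeList_reconstruct (b :: r) b rfl
    simp only [edgeList, List.map_cons]
    exact congrArg _ IH

lemma path_shape {x y : X} {γ : List X} (hxy : x ≠ y) (hh : γ.head? = some x)
    (hl : γ.getLast? = some y) : ∃ b r, γ = x :: b :: r := by
  match γ with
  | [] => simp at hh
  | [a] => simp at hh hl; subst hh; subst hl; exact absurd rfl hxy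
  | a :: b :: r => simp at hh; exact ⟨b, r, by rw [hh]⟩

lemma head?_eq_of_edgeList {γ : List X} {e : X × X} {l : List (X × X)}
    (h : edgeList γ = e :: l) : γ.head? = some e.1 := by
  match γ with
  | [] => simp [edgeList] at h
  | [a] => simp [edgeList] at h
  | a :: b :: r =>
    simp only [edgeList, List.cons.injEq] at h
    simp [← h.1]

lemma telescope (f : X → ℝ) : ∀ (γ : List X) (x y : X), γ.head? = some x →
    γ.getLast? = some y →
    ((edgeList γ).map (fun e => f e.1 - f e.2)).sum = f x - f y
  | [], x, y, hh, hl => by simp at hh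
  | [a], x, y, hh, hl => by
      simp at hh hl; subst hh; subst hl; simp [edgeList]
  | a :: b :: r, x, y, hh, hl => by
      simp only [List.head?_cons, Option.some.injEq] at hh
      subst hh
      rw [List.getLast?_cons_cons] at hl
      have IH := telescope f (b :: r) b y rfl hl
      simp only [edgeList, List.map_cons, List.sum_cons, IH]
      ring

lemma paths_finite [Fintype X] (E : Finset (X × X)) :
    {γ : List X | ∃ x y, IsPathIn E x y γ}.Finite := by
  classical
  have hfin : {l : List (X × X) | l.Nodup}.Finite :=
    (List.finite_length_le (X × X) (Fintype.card (X × X))).subset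
      fun l hl => hl.length_le_card
  refine Set.Finite.of_finite_image (f := edgeList) (hfin.subset ?_) ?_
  · rintro _ ⟨γ, ⟨x, y, hγ⟩, rfl⟩; exact hγ.2.2.2.2
  · rintro γ1 ⟨x1, y1, h1⟩ γ2 ⟨x2, y2, h2⟩ heq
    obtain ⟨b1, r1, hγ1⟩ := path_shape h1.1 h1.2.1 h1.2.2.1
    have hne : edgeList γ1 ≠ [] := by subst hγ1; simp [edgeList]
    obtain ⟨e, l, hel⟩ := List.exists_cons_of_ne_nil hne
    have hh1 := head?_eq_of_edgeList hel
    have hh2 := head?_eq_of_edgeList (heq ▸ hel)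
    rw [edgeList_reconstruct γ1 e.1 hh1, edgeList_reconstruct γ2 e.1 hh2, heq]

end AuxPathLemmas

theorem stmt8 {X : Type*} [Fintype X]
    (π : X → ℝ) (hπpos : ∀ x, 0 < π x) (hπsum : ∑ x, π x = 1)
    (P : Matrix X X ℝ) (hProw : ∀ x, ∑ y, P x y = 1) (hPnn : ∀ x y, 0 ≤ P x y)
    (E : Finset (X × X)) (hE : ∀ e ∈ E, e.1 ≠ e.2 ∧ 0 < P e.1 e.2)
    (w : X × X → ℝ) (hw : ∀ e ∈ E, 0 < w e)
    (φ : List X → ℝ) (hφnn : ∀ γ, (∃ x y, IsPathIn E x y γ) → 0 ≤ φ γ)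
    (f : X → ℝ) :
    ∑ x, ∑ y, (f x - f y) ^ 2 * flowBetween E φ x y ≤
      congestion π P E w φ * ∑ e ∈ E, π e.1 * P e.1 e.2 * (f e.1 - f e.2) ^ 2 := by
  classical
  have hΓ : {γ : List X | ∃ x y, IsPathIn E x y γ}.Finite := paths_finite E
  set G : Finset (List X) := hΓ.toFinset with hGdef
  have hGmem : ∀ γ, γ ∈ G ↔ ∃ x y, IsPathIn E x y γ := fun γ => hΓ.mem_toFinset
  -- rewrite flowBetween as a finite sum
  have hflow : ∀ x y, flowBetween E φ x y
      = ∑ γ ∈ G.filter (fun γ => IsPathIn E x y γ), φ γ := by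
    intro x y
    have hsub : {γ : List X | IsPathIn E x y γ}.Finite :=
      hΓ.subset fun γ hγ => ⟨x, y, hγ⟩
    haveI : Fintype {γ : List X // IsPathIn E x y γ} := hsub.fintype
    rw [flowBetween, tsum_fintype]
    refine (Finset.sum_subtype _ (fun γ => ?_) φ).symm
    simp only [Finset.mem_filter]
    exact ⟨fun h => h.2, fun h => ⟨(hGmem γ).2 ⟨x, y, h⟩, h⟩⟩
  -- rewrite the congestion numerator as a finite sum
  have hTe : ∀ e : X × X,
      (∑' γ : {γ : List X // (∃ x y, IsPathIn E x y γ) ∧ e ∈ edgeList γ}, wlen w γ * φ γ)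
      = ∑ γ ∈ G.filter (fun γ => e ∈ edgeList γ), wlen w γ * φ γ := by
    intro e
    have hsub : {γ : List X | (∃ x y, IsPathIn E x y γ) ∧ e ∈ edgeList γ}.Finite :=
      hΓ.subset fun γ hγ => hγ.1
    haveI : Fintype {γ : List X // (∃ x y, IsPathIn E x y γ) ∧ e ∈ edgeList γ} :=
      hsub.fintype
    rw [tsum_fintype]
    refine (Finset.sum_subtype _ (fun γ => ?_) (fun γ => wlen w γ * φ γ)).symm
    simp only [Finset.mem_filter]
    exact ⟨fun h => ⟨(hGmem γ).1 h.1, h.2⟩, fun h => ⟨(hGmem γ).2 h.1, h.2⟩⟩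
  -- congestion bound for each edge
  have hcong : ∀ e ∈ E,
      (∑ γ ∈ G.filter (fun γ => e ∈ edgeList γ), wlen w γ * φ γ)
        ≤ congestion π P E w φ * (π e.1 * P e.1 e.2 * w e) := by
    intro e he
    have hQw : 0 < π e.1 * P e.1 e.2 * w e :=
      mul_pos (mul_pos (hπpos e.1) (hE e he).2) (hw e he)
    have hb : BddAbove (Set.range fun e' : X × X =>
        ⨆ _ : e' ∈ E,
          (∑' γ : {γ : List X // (∃ x y, IsPathIn E x y γ) ∧ e' ∈ edgeList γ},
            wlen w γ * φ γ) / (π e'.1 * P e'.1 e'.2 * w e')) :=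
      (Set.finite_range _).bddAbove
    have h1 := le_ciSup hb e
    rw [ciSup_pos he] at h1
    have h2 : (∑ γ ∈ G.filter (fun γ => e ∈ edgeList γ), wlen w γ * φ γ)
        / (π e.1 * P e.1 e.2 * w e) ≤ congestion π P E w φ := by
      rw [← hTe e]; exact h1
    exact (div_le_iff₀ hQw).1 h2
  -- per-path Cauchy–Schwarz bound
  have hpath : ∀ x y γ, IsPathIn E x y γ →
      (f x - f y) ^ 2 ≤ wlen w γ *
        ∑ e ∈ E, (if e ∈ edgeList γ then (f e.1 - f e.2) ^ 2 / w e else 0) := by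
    intro x y γ hp
    set s : Finset (X × X) := (edgeList γ).toFinset with hs
    have hsmem : ∀ e, e ∈ s ↔ e ∈ edgeList γ := fun e => List.mem_toFinset
    have hsE : ∀ e ∈ s, e ∈ E := fun e hes => hp.2.2.2.1 e ((hsmem e).1 hes)
    have hwpos : ∀ e ∈ s, 0 < w e := fun e hes => hw e (hsE e hes)
    have h1 : f x - f y = ∑ e ∈ s, (f e.1 - f e.2) := by
      rw [List.sum_toFinset _ hp.2.2.2.2, telescope f γ x y hp.2.1 hp.2.2.1]
    have hwlen : wlen w γ = ∑ e ∈ s, w e :=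
      (List.sum_toFinset _ hp.2.2.2.2).symm
    have hfilter : s = E.filter (fun e => e ∈ edgeList γ) := by
      ext e
      simp only [hsmem, Finset.mem_filter]
      exact ⟨fun h => ⟨hp.2.2.2.1 e h, h⟩, fun h => h.2⟩
    have hsum2 : (∑ e ∈ E, (if e ∈ edgeList γ then (f e.1 - f e.2) ^ 2 / w e else 0))
        = ∑ e ∈ s, (f e.1 - f e.2) ^ 2 / w e := by
      rw [hfilter, ← Finset.sum_filter]
    rw [hwlen, hsum2]
    calc (f x - f y) ^ 2
        = (∑ e ∈ s, Real.sqrt (w e) * ((f e.1 - f e.2) / Real.sqrt (w e))) ^ 2 := by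
          rw [h1]
          congr 1
          refine Finset.sum_congr rfl fun e hes => ?_
          rw [mul_comm, div_mul_cancel₀ _ (ne_of_gt (Real.sqrt_pos.2 (hwpos e hes)))]
      _ ≤ (∑ e ∈ s, Real.sqrt (w e) ^ 2) *
            ∑ e ∈ s, ((f e.1 - f e.2) / Real.sqrt (w e)) ^ 2 :=
          Finset.sum_mul_sq_le_sq_mul_sq s _ _
      _ = (∑ e ∈ s, w e) * ∑ e ∈ s, (f e.1 - f e.2) ^ 2 / w e := by
          congr 1 <;> refine Finset.sum_congr rfl fun e hes => ?_
          · exact Real.sq_sqrt (le_of_lt (hwpos e hes))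
          · rw [div_pow, Real.sq_sqrt (le_of_lt (hwpos e hes))]
  -- nonnegativity facts
  have hwlen_nn : ∀ γ ∈ G, 0 ≤ wlen w γ := by
    intro γ hγ
    obtain ⟨x, y, hp⟩ := (hGmem γ).1 hγ
    apply List.sum_nonneg
    intro a ha
    obtain ⟨e, he, rfl⟩ := List.mem_map.1 ha
    exact le_of_lt (hw e (hp.2.2.2.1 e he))
  have hφG : ∀ γ ∈ G, 0 ≤ φ γ := fun γ hγ => hφnn γ ((hGmem γ).1 hγ)
  -- merge the double sum over endpoints into a single sum over paths
  have hmerge : ∀ h : List X → ℝ,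
      (∑ x, ∑ y, ∑ γ ∈ G.filter (fun γ => IsPathIn E x y γ), h γ) = ∑ γ ∈ G, h γ := by
    intro h
    have hstep : ∀ x : X, (∑ y, ∑ γ ∈ G.filter (fun γ => IsPathIn E x y γ), h γ)
        = ∑ γ ∈ G, ∑ y, if IsPathIn E x y γ then h γ else 0 := by
      intro x
      simp_rw [Finset.sum_filter]
      exact Finset.sum_comm
    simp_rw [hstep]
    rw [Finset.sum_comm]
    refine Finset.sum_congr rfl fun γ hγ => ?_
    obtain ⟨x0, y0, hp⟩ := (hGmem γ).1 hγ
    have hux : ∀ x y, IsPathIn E x y γ → x = x0 ∧ y = y0 := fun x y hp' =>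
      ⟨Option.some.inj (hp'.2.1.symm.trans hp.2.1),
       Option.some.inj (hp'.2.2.1.symm.trans hp.2.2.1)⟩
    rw [Finset.sum_eq_single x0]
    · rw [Finset.sum_eq_single y0]
      · rw [if_pos hp]
      · intro y _ hy
        rw [if_neg fun hp' => hy (hux x0 y hp').2]
      · intro hy; exact absurd (Finset.mem_univ y0) hy
    · intro x _ hx
      refine Finset.sum_eq_zero fun y _ => ?_
      rw [if_neg fun hp' => hx (hux x y hp').1]
    · intro hx; exact absurd (Finset.mem_univ x0) hx
  -- main chain
  calc ∑ x, ∑ y, (f x - f y) ^ 2 * flowBetween E φ x y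
      = ∑ x, ∑ y, ∑ γ ∈ G.filter (fun γ => IsPathIn E x y γ), (f x - f y) ^ 2 * φ γ := by
        refine Finset.sum_congr rfl fun x _ => Finset.sum_congr rfl fun y _ => ?_
        rw [hflow, Finset.mul_sum]
    _ ≤ ∑ x, ∑ y, ∑ γ ∈ G.filter (fun γ => IsPathIn E x y γ),
          (wlen w γ * ∑ e ∈ E, (if e ∈ edgeList γ then (f e.1 - f e.2) ^ 2 / w e else 0))
            * φ γ := by
        refine Finset.sum_le_sum fun x _ => Finset.sum_le_sum fun y _ =>
          Finset.sum_le_sum fun γ hγ => ?_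
        have hγG := (Finset.mem_filter.1 hγ).1
        have hp := (Finset.mem_filter.1 hγ).2
        exact mul_le_mul_of_nonneg_right (hpath x y γ hp) (hφG γ hγG)
    _ = ∑ γ ∈ G,
          (wlen w γ * ∑ e ∈ E, (if e ∈ edgeList γ then (f e.1 - f e.2) ^ 2 / w e else 0))
            * φ γ := hmerge _
    _ = ∑ e ∈ E, (∑ γ ∈ G.filter (fun γ => e ∈ edgeList γ), wlen w γ * φ γ)
          * ((f e.1 - f e.2) ^ 2 / w e) := by
        have hterm : ∀ γ ∈ G,
            (wlen w γ * ∑ e ∈ E, (if e ∈ edgeList γ then (f e.1 - f e.2) ^ 2 / w e else 0))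
              * φ γ
            = ∑ e ∈ E, (if e ∈ edgeList γ then
                wlen w γ * φ γ * ((f e.1 - f e.2) ^ 2 / w e) else 0) := by
          intro γ _
          rw [Finset.mul_sum, Finset.sum_mul]
          refine Finset.sum_congr rfl fun e _ => ?_
          split_ifs with hc
          · ring
          · simp
        rw [Finset.sum_congr rfl hterm, Finset.sum_comm]
        refine Finset.sum_congr rfl fun e _ => ?_
        rw [← Finset.sum_filter, Finset.sum_mul]
    _ ≤ ∑ e ∈ E, congestion π P E w φ * (π e.1 * P e.1 e.2 * w e)
          * ((f e.1 - f e.2) ^ 2 / w e) := by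
        refine Finset.sum_le_sum fun e he => ?_
        exact mul_le_mul_of_nonneg_right (hcong e he)
          (div_nonneg (sq_nonneg _) (le_of_lt (hw e he)))
    _ = congestion π P E w φ * ∑ e ∈ E, π e.1 * P e.1 e.2 * (f e.1 - f e.2) ^ 2 := by
        rw [Finset.mul_sum]
        refine Finset.sum_congr rfl fun e he => ?_
        have hwne : w e ≠ 0 := ne_of_gt (hw e he)
        field_simp
end
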